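/- Let h_1,…,h_K ∈ ℂ^N, set H_l = h_l h_l^H, and let Ω(H) = {(tr(Q H_1), …, tr(Q H_K)) : Q Hermitian positive semidefinite, tr(Q) ≤ 1}. Then for every η ∈ ℝ^K, the support function of Ω(H) satisfies s_{Ω(H)}(η) = max(0, λ₁(Σ_{l=1}^K η_l H_l)) ≥ 0, where λ₁ denotes the largest eigenvalue. -/

import Mathlib

/-!
By linearity of the trace, `∑ η_l tr(Q H_l) = Re tr(Q M)` with `M = ∑ η_l H_l`, which is Hermitian.
If every eigenvalue of `M` is at most `c`, then `c • 1 - M` is positive semidefinite, and since the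
trace of a product of two positive semidefinite matrices is nonnegative, `Re tr(Q M) ≤ c tr Q`.
Taking `c = max 0 λ₁ ≥ 0` and `tr Q ≤ 1` gives the upper bound; it is attained by `Q = 0` and by
`Q = v vᴴ` for a unit eigenvector `v` of each eigenvalue.
-/

open Matrix
open scoped ComplexOrder

/-- The largest eigenvalue of a Hermitian matrix. -/
noncomputable def lam1 {N : ℕ} (M : Matrix (Fin N) (Fin N) ℂ) : ℝ :=
  if hM : M.IsHermitian then ⨆ i, hM.eigenvalues i else 0

/-- `Ω(H) = {(tr(Q H_1),…,tr(Q H_K)) : Q PSD, tr Q ≤ 1}`. -/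
def OmegaH {N K : ℕ} (H : Fin K → Matrix (Fin N) (Fin N) ℂ) : Set (Fin K → ℝ) :=
  {y | ∃ Q : Matrix (Fin N) (Fin N) ℂ, Q.PosSemidef ∧ Q.trace.re ≤ 1 ∧
    y = fun l => ((Q * H l).trace).re}

namespace Matrix

variable {𝕜 n : Type*} [RCLike 𝕜] [Fintype n] [DecidableEq n]

open scoped MatrixOrder in
theorem PosSemidef.exists_eq_conjTranspose_mul_self {Q : Matrix n n 𝕜} (hQ : Q.PosSemidef) :
    ∃ B : Matrix n n 𝕜, Q = Bᴴ * B := by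
  refine ⟨CFC.sqrt Q, ?_⟩
  rw [(CFC.sqrt_nonneg Q).posSemidef.isHermitian.eq, CFC.sqrt_mul_sqrt_self Q hQ.nonneg]

theorem PosSemidef.re_trace_mul_nonneg {P Q : Matrix n n 𝕜} (hQ : Q.PosSemidef)
    (hP : P.PosSemidef) : 0 ≤ RCLike.re (Q * P).trace := by
  obtain ⟨B, rfl⟩ := hQ.exists_eq_conjTranspose_mul_self
  rw [Matrix.mul_assoc, trace_mul_comm]
  exact (RCLike.nonneg_iff.mp (hP.mul_mul_conjTranspose_same B).trace_nonneg).1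

theorem IsHermitian.posSemidef_smul_one_sub {M : Matrix n n 𝕜} (hM : M.IsHermitian) {c : ℝ}
    (hc : ∀ i, hM.eigenvalues i ≤ c) : ((c : 𝕜) • 1 - M).PosSemidef := by
  rw [posSemidef_iff_isHermitian_and_spectrum_nonneg]
  refine ⟨(isHermitian_one.smul (RCLike.conj_ofReal c)).sub hM, ?_⟩
  rw [← Algebra.algebraMap_eq_smul_one, ← spectrum.singleton_sub_eq, hM.spectrum_eq_image_range]
  rintro _ ⟨_, rfl, _, ⟨_, ⟨i, rfl⟩, rfl⟩, rfl⟩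
  show (0 : 𝕜) ≤ (c : 𝕜) - (hM.eigenvalues i : 𝕜)
  rw [← RCLike.ofReal_sub, RCLike.ofReal_nonneg, sub_nonneg]
  exact hc i

theorem IsHermitian.re_trace_mul_le {M Q : Matrix n n 𝕜} (hM : M.IsHermitian) (hQ : Q.PosSemidef)
    {c : ℝ} (hc : ∀ i, hM.eigenvalues i ≤ c) : RCLike.re (Q * M).trace ≤ c * RCLike.re Q.trace := by
  have := hQ.re_trace_mul_nonneg (hM.posSemidef_smul_one_sub hc)
  rw [Matrix.mul_sub, trace_sub, map_sub, Matrix.mul_smul, Matrix.mul_one, trace_smul, smul_eq_mul,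
    RCLike.re_ofReal_mul] at this
  linarith

theorem IsHermitian.dotProduct_star_eigenvectorBasis {M : Matrix n n 𝕜} (hM : M.IsHermitian)
    (i : n) :
    ⇑(hM.eigenvectorBasis i) ⬝ᵥ star ⇑(hM.eigenvectorBasis i) = 1 := by
  rw [← EuclideanSpace.inner_eq_star_dotProduct, inner_self_eq_norm_sq_to_K,
    hM.eigenvectorBasis.norm_eq_one]
  simp

theorem IsHermitian.exists_posSemidef_trace_eq_one_re_trace_mul_eq {M : Matrix n n 𝕜}
    (hM : M.IsHermitian) (i : n) :
    ∃ Q : Matrix n n 𝕜, Q.PosSemidef ∧ Q.trace = 1 ∧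
      RCLike.re (Q * M).trace = hM.eigenvalues i := by
  set v : n → 𝕜 := ⇑(hM.eigenvectorBasis i)
  refine ⟨vecMulVec v (star v), posSemidef_vecMulVec_self_star v, ?_, ?_⟩
  · rw [trace_vecMulVec, hM.dotProduct_star_eigenvectorBasis]
  · rw [trace_mul_comm, mul_vecMulVec, trace_vecMulVec, hM.mulVec_eigenvectorBasis, smul_dotProduct,
      hM.dotProduct_star_eigenvectorBasis, RCLike.smul_re, RCLike.one_re, mul_one]

theorem IsHermitian.isGreatest_re_trace_mul {M : Matrix n n 𝕜} (hM : M.IsHermitian) :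
    IsGreatest ((fun Q => RCLike.re (Q * M).trace) '' {Q | Q.PosSemidef ∧ RCLike.re Q.trace ≤ 1})
      (max 0 (⨆ i, hM.eigenvalues i)) := by
  set S := (fun Q => RCLike.re (Q * M).trace) '' {Q | Q.PosSemidef ∧ RCLike.re Q.trace ≤ 1}
  have hzero : 0 ∈ S := ⟨0, ⟨PosSemidef.zero, by simp⟩, by simp⟩
  have heig : ∀ i, hM.eigenvalues i ∈ S := fun i => by
    obtain ⟨Q, hQ, htr, hQM⟩ := hM.exists_posSemidef_trace_eq_one_re_trace_mul_eq i
    exact ⟨Q, ⟨hQ, by simp [htr]⟩, hQM⟩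
  refine ⟨?_, ?_⟩
  · have hsup : (⨆ i, hM.eigenvalues i) ∈ S := by
      rcases isEmpty_or_nonempty n with _ | _
      · rw [Real.iSup_of_isEmpty]
        exact hzero
      · obtain ⟨i, hi⟩ := exists_eq_ciSup_of_finite (f := hM.eigenvalues)
        exact hi ▸ heig i
    rcases max_choice 0 (⨆ i, hM.eigenvalues i) with h | h <;> rw [h] <;> assumption
  · rintro _ ⟨Q, ⟨hQ, htr⟩, rfl⟩
    have hc : ∀ i, hM.eigenvalues i ≤ max 0 (⨆ i, hM.eigenvalues i) := fun i =>
      le_max_of_le_right (le_ciSup (Finite.bddAbove_range _) i)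
    calc RCLike.re (Q * M).trace ≤ _ * RCLike.re Q.trace := hM.re_trace_mul_le hQ hc
      _ ≤ max 0 (⨆ i, hM.eigenvalues i) := mul_le_of_le_one_right (le_max_left _ _) htr

end Matrix

theorem lam1_eq_iSup {N : ℕ} {M : Matrix (Fin N) (Fin N) ℂ} (hM : M.IsHermitian) :
    lam1 M = ⨆ i, hM.eigenvalues i :=
  dif_pos hM

theorem re_trace_mul_sum_smul {N K : ℕ} (Q : Matrix (Fin N) (Fin N) ℂ)
    (H : Fin K → Matrix (Fin N) (Fin N) ℂ) (η : Fin K → ℝ) :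
    ((Q * ∑ l, (η l : ℂ) • H l).trace).re = ∑ l, η l * ((Q * H l).trace).re := by
  simp only [Matrix.mul_sum, Matrix.mul_smul, trace_sum, trace_smul, Complex.re_sum, smul_eq_mul,
    Complex.re_ofReal_mul]

theorem image_omegaH_eq_image_re_trace_mul {N K : ℕ} (H : Fin K → Matrix (Fin N) (Fin N) ℂ)
    (η : Fin K → ℝ) :
    (fun y : Fin K → ℝ => ∑ l, η l * y l) '' OmegaH H =
      (fun Q => ((Q * ∑ l, (η l : ℂ) • H l).trace).re) '' {Q | Q.PosSemidef ∧ Q.trace.re ≤ 1} := by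
  have hΩ : OmegaH H =
      (fun Q l => ((Q * H l).trace).re) '' {Q | Q.PosSemidef ∧ Q.trace.re ≤ 1} := by
    ext y
    simp only [OmegaH, Set.mem_ofPred_eq, Set.mem_image, and_assoc, eq_comm]
  simp only [hΩ, Set.image_image, re_trace_mul_sum_smul]

/-- For `H_l = h_l h_lᴴ`, the support function of `Ω(H)` in any direction `η`
equals `max(0, λ₁(Σ_l η_l H_l))`, and the maximum is attained. -/
theorem omega_support_function
    (N K : ℕ)
    (h : Fin K → (Fin N → ℂ))
    (η : Fin K → ℝ) :
    IsGreatest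
      ((fun y : Fin K → ℝ => ∑ l, η l * y l) ''
        OmegaH (fun l => Matrix.vecMulVec (h l) (star (h l))))
      (max 0 (lam1 (∑ l, (η l : ℂ) • Matrix.vecMulVec (h l) (star (h l))))) := by
  have hM : (∑ l, (η l : ℂ) • vecMulVec (h l) (star (h l))).IsHermitian :=
    isSelfAdjoint_sum _ fun l _ =>
      (posSemidef_vecMulVec_self_star (h l)).isHermitian.smul (Complex.conj_ofReal _)
  rw [image_omegaH_eq_image_re_trace_mul, lam1_eq_iSup hM]
  exact hM.isGreatest_re_trace_mul
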